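/- arXiv:1506.01504 — 6 statements merged into one kernel-verified Lean document; each statement's English description precedes it below -/
import Mathlib

section
/- Let d ≥ 1 and let a₁, …, a_N ∈ s'(ℤ^d). Then the following are equivalent: (1) there exist b₁, …, b_N ∈ s'(ℤ^d) such that b₁(n)a₁(n) + ⋯ + b_N(n)a_N(n) = 1 for all n ∈ ℤ^d; (2) there exist δ > 0 and K ∈ ℕ such that for all n ∈ ℤ^d, |a₁(n)| + ⋯ + |a_N(n)| ≥ δ(1 + ‖n‖₁)^{−K}. -/
/-!
If `∑ bᵢ aᵢ = 1` with `|bᵢ(n)| ≤ M (1 + ‖n‖₁)^k`, the triangle inequality gives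
`1 ≤ M (1 + ‖n‖₁)^k ∑ |aᵢ(n)|`. Conversely, with `S = ∑ |aⱼ|` the coefficients
`bᵢ = conj aᵢ / (|aᵢ| S)` satisfy `bᵢ aᵢ = |aᵢ| / S`, hence `∑ bᵢ aᵢ = 1`, and `|bᵢ| ≤ 1 / S`,
which the lower bound on `S` makes polynomially bounded.
-/

open ComplexConjugate

/-- The 1-norm of a lattice point `n ∈ ℤ^d`. -/
def norm1 {d : ℕ} (n : Fin d → ℤ) : ℝ := ∑ i, |(n i : ℝ)|

/-- `a : ℤ^d → ℂ` has at most polynomial growth, i.e. belongs to `s'(ℤ^d)`. -/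
def PolyGrowth {d : ℕ} (a : (Fin d → ℤ) → ℂ) : Prop :=
  ∃ M : ℝ, 0 < M ∧ ∃ k : ℕ, ∀ n : Fin d → ℤ, ‖a n‖ ≤ M * (1 + norm1 n) ^ k

lemma one_le_one_add_norm1 {d : ℕ} (n : Fin d → ℤ) : 1 ≤ 1 + norm1 n :=
  le_add_of_nonneg_right (Finset.sum_nonneg fun _ _ => abs_nonneg _)

lemma one_add_norm1_pos {d : ℕ} (n : Fin d → ℤ) : 0 < 1 + norm1 n :=
  one_pos.trans_le (one_le_one_add_norm1 n)

lemma PolyGrowth.exists_uniform {d : ℕ} {ι : Type*} [Fintype ι]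
    {f : ι → (Fin d → ℤ) → ℂ} (hf : ∀ i, PolyGrowth (f i)) :
    ∃ M : ℝ, 0 < M ∧ ∃ k : ℕ, ∀ i n, ‖f i n‖ ≤ M * (1 + norm1 n) ^ k := by
  choose M hM k hk using hf
  have hsum_nonneg : 0 ≤ ∑ j, M j := Finset.sum_nonneg fun j _ => (hM j).le
  refine ⟨1 + ∑ j, M j, by positivity, Finset.univ.sup k, fun i n => ?_⟩
  have hMi : M i ≤ 1 + ∑ j, M j := by
    linarith [Finset.single_le_sum (fun j _ => (hM j).le) (Finset.mem_univ i)]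
  have hki : (1 + norm1 n) ^ k i ≤ (1 + norm1 n) ^ Finset.univ.sup k :=
    pow_le_pow_right₀ (one_le_one_add_norm1 n) (Finset.le_sup (Finset.mem_univ i))
  calc ‖f i n‖ ≤ M i * (1 + norm1 n) ^ k i := hk i n
    _ ≤ (1 + ∑ j, M j) * (1 + norm1 n) ^ Finset.univ.sup k :=
        mul_le_mul hMi hki (pow_nonneg (one_add_norm1_pos n).le _) (by positivity)

lemma mul_zpow_neg_le_iff {δ w s : ℝ} (hδ : 0 < δ) (hw : 0 < w) (K : ℕ) :
    δ * w ^ (-(K : ℤ)) ≤ s ↔ 1 ≤ δ⁻¹ * w ^ K * s := by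
  rw [← inv_le_iff_one_le_mul₀' (by positivity), mul_inv, inv_inv, zpow_neg, zpow_natCast]

lemma one_le_mul_sum_norm_of_sum_mul_eq_one {ι R : Type*} [Fintype ι] [SeminormedRing R]
    [NormOneClass R] {a b : ι → R} {C : ℝ} (hb : ∀ i, ‖b i‖ ≤ C)
    (hab : ∑ i, b i * a i = 1) : 1 ≤ C * ∑ i, ‖a i‖ :=
  calc (1 : ℝ) = ‖∑ i, b i * a i‖ := by rw [hab, norm_one]
    _ ≤ ∑ i, ‖b i‖ * ‖a i‖ := (norm_sum_le _ _).trans (Finset.sum_le_sum fun i _ => norm_mul_le _ _)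
    _ ≤ ∑ i, C * ‖a i‖ := Finset.sum_le_sum fun i _ => by gcongr; exact hb i
    _ = C * ∑ i, ‖a i‖ := (Finset.mul_sum _ _ _).symm

-- At `z = 0` both sides vanish, since `0 / 0 = 0`.
lemma Complex.conj_div_norm_mul_self (z : ℂ) : conj z / ‖z‖ * z = ‖z‖ := by
  rcases eq_or_ne z 0 with rfl | hz
  · simp
  · have hz' : (‖z‖ : ℂ) ≠ 0 := by exact_mod_cast norm_ne_zero_iff.2 hz
    rw [div_mul_eq_mul_div, Complex.conj_mul', div_eq_iff hz', sq]

lemma Complex.norm_conj_div_norm_le_one (z : ℂ) : ‖conj z / ‖z‖‖ ≤ 1 := by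
  rw [norm_div, Complex.norm_conj, Complex.norm_real, norm_norm]
  exact div_self_le_one _

lemma Complex.exists_sum_mul_eq_one_of_sum_norm_pos {ι : Type*} [Fintype ι] (a : ι → ℂ)
    (ha : 0 < ∑ i, ‖a i‖) :
    ∃ b : ι → ℂ, (∀ i, ‖b i‖ ≤ (∑ j, ‖a j‖)⁻¹) ∧ ∑ i, b i * a i = 1 := by
  set S := ∑ j, ‖a j‖
  refine ⟨fun i => conj (a i) / ‖a i‖ / S, fun i => ?_, ?_⟩
  · rw [norm_div, Complex.norm_real, Real.norm_of_nonneg ha.le, div_eq_mul_inv]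
    exact mul_le_of_le_one_left (inv_nonneg.2 ha.le) (Complex.norm_conj_div_norm_le_one _)
  · have hS : (S : ℂ) ≠ 0 := by exact_mod_cast ha.ne'
    simp_rw [div_mul_eq_mul_div _ (S : ℂ), Complex.conj_div_norm_mul_self, ← Finset.sum_div]
    rw [← Complex.ofReal_sum, div_self hS]

theorem corona_type_theorem_general (d N : ℕ)
    (a : Fin N → (Fin d → ℤ) → ℂ) :
    (∃ b : Fin N → (Fin d → ℤ) → ℂ, (∀ i, PolyGrowth (b i)) ∧
      ∀ n : Fin d → ℤ, ∑ i, b i n * a i n = 1) ↔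
    (∃ δ : ℝ, 0 < δ ∧ ∃ K : ℕ, ∀ n : Fin d → ℤ,
      δ * (1 + norm1 n) ^ (-(K : ℤ)) ≤ ∑ i, ‖a i n‖) := by
  constructor
  · rintro ⟨b, hb, hbezout⟩
    obtain ⟨M, hM, k, hbM⟩ := PolyGrowth.exists_uniform hb
    refine ⟨M⁻¹, inv_pos.2 hM, k, fun n => ?_⟩
    rw [mul_zpow_neg_le_iff (inv_pos.2 hM) (one_add_norm1_pos n), inv_inv]
    exact one_le_mul_sum_norm_of_sum_mul_eq_one (fun i => hbM i n) (hbezout n)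
  · rintro ⟨δ, hδ, K, hK⟩
    have hpos n : 0 < ∑ i, ‖a i n‖ :=
      (mul_pos hδ (zpow_pos (one_add_norm1_pos n) _)).trans_le (hK n)
    choose b hb_norm hb_sum using fun n =>
      Complex.exists_sum_mul_eq_one_of_sum_norm_pos (fun i => a i n) (hpos n)
    refine ⟨fun i n => b n i, fun i => ⟨δ⁻¹, inv_pos.2 hδ, K, fun n => ?_⟩, hb_sum⟩
    have hlower := (mul_zpow_neg_le_iff hδ (one_add_norm1_pos n) K).1 (hK n)
    exact (hb_norm n i).trans ((inv_le_iff_one_le_mul₀ (hpos n)).2 hlower)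

theorem corona_type_theorem (d N : ℕ) (hd : 1 ≤ d)
    (a : Fin N → (Fin d → ℤ) → ℂ) (ha : ∀ i, PolyGrowth (a i)) :
    (∃ b : Fin N → (Fin d → ℤ) → ℂ, (∀ i, PolyGrowth (b i)) ∧
      ∀ n : Fin d → ℤ, ∑ i, b i n * a i n = 1) ↔
    (∃ δ : ℝ, 0 < δ ∧ ∃ K : ℕ, ∀ n : Fin d → ℤ,
      δ * (1 + norm1 n) ^ (-(K : ℤ)) ≤ ∑ i, ‖a i n‖) :=
  corona_type_theorem_general d N a
end

section
/- The ring s'(ℤ^d) is a Hermite ring: for every N ∈ ℕ and every N-tuple (a₁, …, a_N) of elements of s'(ℤ^d) for which there exist b₁, …, b_N ∈ s'(ℤ^d) with b₁a₁ + ⋯ + b_N a_N = 1, there exists an N×N matrix A with entries in s'(ℤ^d) that is invertible as an element of the matrix ring over s'(ℤ^d) and whose first column satisfies A_{i1} = a_i for i = 1, …, N. -/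
/-!
Pointwise in `n`, let `t` be an index where `|a_i(n)|` is largest. From `∑ bᵢ aᵢ = 1` we get
`1 ≤ (∑ |bᵢ(n)|) |a_t(n)|`, so `1 / a_t` has polynomial growth. Completing the column `a(n)` by
standard basis vectors (all except `e_t`) gives a matrix with first column `a(n)` and determinant
`± a_t(n)`. Its entries lie in `s'(ℤ^d)`, and so does the inverse of its determinant, so it is
invertible over `s'(ℤ^d)` by the adjugate formula.
-/

open Finset

namespace Matrix

variable {n R : Type*} [DecidableEq n]

theorem det_one_updateCol [Fintype n] [CommRing R] (t : n) (v : n → R) :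
    ((1 : Matrix n n R).updateCol t v).det = v t := by
  simpa [one_apply] using det_updateCol_sum (1 : Matrix n n R) t v

def pivotCompletion [Zero R] [One R] (v : n → R) (i₀ t : n) : Matrix n n R :=
  ((1 : Matrix n n R).updateCol t v).submatrix id (Equiv.swap i₀ t)

@[simp]
theorem pivotCompletion_apply_self [Zero R] [One R] (v : n → R) (i₀ t i : n) :
    pivotCompletion v i₀ t i i₀ = v i := by
  simp [pivotCompletion]

theorem norm_pivotCompletion_apply_le [SeminormedRing R] [NormOneClass R] (v : n → R)
    (i₀ t i j : n) : ‖pivotCompletion v i₀ t i j‖ ≤ ‖v i‖ + 1 := by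
  simp only [pivotCompletion, submatrix_apply, id, updateCol_apply, one_apply]
  split_ifs <;> simp; positivity

theorem norm_det_pivotCompletion [Fintype n] [NormedCommRing R] [NormOneClass R] (v : n → R)
    (i₀ t : n) : ‖(pivotCompletion v i₀ t).det‖ = ‖v t‖ := by
  rw [pivotCompletion, det_permute', det_one_updateCol]
  rcases Int.units_eq_one_or (Equiv.Perm.sign (Equiv.swap i₀ t)) with h | h <;> simp [h]

end Matrix

theorem one_le_sum_norm_mul_norm_of_sum_mul_eq_one {R ι : Type*} [SeminormedRing R]
    [NormOneClass R] [Fintype ι] {a b : ι → R} (h : ∑ i, b i * a i = 1) {t : ι}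
    (ht : ∀ i, ‖a i‖ ≤ ‖a t‖) : 1 ≤ (∑ i, ‖b i‖) * ‖a t‖ :=
  calc (1 : ℝ) = ‖∑ i, b i * a i‖ := by rw [h, norm_one]
    _ ≤ ∑ i, ‖b i‖ * ‖a i‖ := (norm_sum_le _ _).trans (sum_le_sum fun i _ => norm_mul_le _ _)
    _ ≤ ∑ i, ‖b i‖ * ‖a t‖ := sum_le_sum fun i _ => by gcongr; exact ht i
    _ = (∑ i, ‖b i‖) * ‖a t‖ := (sum_mul ..).symm

section PolyGrowth

variable {d : ℕ} {f g : (Fin d → ℤ) → ℂ}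

theorem norm1_nonneg (n : Fin d → ℤ) : 0 ≤ norm1 n :=
  sum_nonneg fun _ _ => abs_nonneg _

theorem polyGrowth_iff :
    PolyGrowth f ↔ ∃ M : ℝ, ∃ k : ℕ, ∀ n, ‖f n‖ ≤ M * (1 + norm1 n) ^ k := by
  refine ⟨fun ⟨M, _, k, h⟩ => ⟨M, k, h⟩, fun ⟨M, k, h⟩ => ?_⟩
  refine ⟨|M| + 1, by positivity, k, fun n => (h n).trans ?_⟩
  have : 0 ≤ (1 + norm1 n) ^ k := by have := norm1_nonneg n; positivity
  nlinarith [le_abs_self M]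

theorem PolyGrowth.of_norm_le (hg : PolyGrowth g) (h : ∀ n, ‖f n‖ ≤ ‖g n‖) : PolyGrowth f :=
  let ⟨M, hM, k, hk⟩ := hg
  ⟨M, hM, k, fun n => (h n).trans (hk n)⟩

theorem polyGrowth_const (c : ℂ) : PolyGrowth fun _ : Fin d → ℤ => c :=
  polyGrowth_iff.mpr ⟨‖c‖, 0, by simp⟩

theorem PolyGrowth.add (hf : PolyGrowth f) (hg : PolyGrowth g) : PolyGrowth (f + g) := by
  obtain ⟨Mf, hMf, kf, hkf⟩ := hf
  obtain ⟨Mg, hMg, kg, hkg⟩ := hg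
  refine polyGrowth_iff.mpr ⟨Mf + Mg, kf + kg, fun n => ?_⟩
  have h1 : 1 ≤ 1 + norm1 n := by linarith [norm1_nonneg n]
  calc ‖f n + g n‖ ≤ Mf * (1 + norm1 n) ^ kf + Mg * (1 + norm1 n) ^ kg :=
        (norm_add_le _ _).trans (add_le_add (hkf n) (hkg n))
    _ ≤ Mf * (1 + norm1 n) ^ (kf + kg) + Mg * (1 + norm1 n) ^ (kf + kg) := by
        gcongr <;> first | exact h1 | omega
    _ = (Mf + Mg) * (1 + norm1 n) ^ (kf + kg) := by ring

theorem PolyGrowth.mul (hf : PolyGrowth f) (hg : PolyGrowth g) : PolyGrowth (f * g) := by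
  obtain ⟨Mf, hMf, kf, hkf⟩ := hf
  obtain ⟨Mg, hMg, kg, hkg⟩ := hg
  refine ⟨Mf * Mg, by positivity, kf + kg, fun n => ?_⟩
  have := norm1_nonneg n
  calc ‖f n * g n‖ ≤ (Mf * (1 + norm1 n) ^ kf) * (Mg * (1 + norm1 n) ^ kg) := by
        rw [norm_mul]; gcongr; exacts [hkf n, hkg n]
    _ = Mf * Mg * (1 + norm1 n) ^ (kf + kg) := by ring

theorem PolyGrowth.neg (hf : PolyGrowth f) : PolyGrowth (-f) :=
  hf.of_norm_le fun n => by simp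

theorem PolyGrowth.ofReal_norm (hf : PolyGrowth f) : PolyGrowth fun n => (‖f n‖ : ℂ) :=
  hf.of_norm_le fun n => by simp

theorem PolyGrowth.of_norm_le_add_one (hg : PolyGrowth g) (h : ∀ n, ‖f n‖ ≤ ‖g n‖ + 1) :
    PolyGrowth f :=
  (hg.ofReal_norm.add (polyGrowth_const 1)).of_norm_le fun n => by
    rw [Pi.add_apply, ← Complex.ofReal_one, ← Complex.ofReal_add,
      Complex.norm_of_nonneg (by positivity)]
    exact h n

end PolyGrowth

def sPrime (d : ℕ) : Subring ((Fin d → ℤ) → ℂ) where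
  carrier := {f | PolyGrowth f}
  mul_mem' := PolyGrowth.mul
  one_mem' := polyGrowth_const 1
  add_mem' := PolyGrowth.add
  zero_mem' := polyGrowth_const 0
  neg_mem' := PolyGrowth.neg

namespace sPrime

variable {d : ℕ}

@[simp]
theorem mem_iff {f : (Fin d → ℤ) → ℂ} : f ∈ sPrime d ↔ PolyGrowth f := Iff.rfl

theorem isUnit_of_polyGrowth_inv (f : sPrime d) (hf : ∀ n, (f : (Fin d → ℤ) → ℂ) n ≠ 0)
    (hinv : PolyGrowth (f : (Fin d → ℤ) → ℂ)⁻¹) : IsUnit f :=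
  .of_mul_eq_one ⟨_, hinv⟩ <| Subtype.ext <| funext fun n => mul_inv_cancel₀ (hf n)

variable {ι : Type*}

def ofPointwise (M : (Fin d → ℤ) → Matrix ι ι ℂ) (hM : ∀ i j, PolyGrowth fun n => M n i j) :
    Matrix ι ι (sPrime d) :=
  Matrix.of fun i j => ⟨fun n => M n i j, hM i j⟩

variable [Fintype ι] [DecidableEq ι]

theorem ofPointwise_det_apply (M : (Fin d → ℤ) → Matrix ι ι ℂ)
    (hM : ∀ i j, PolyGrowth fun n => M n i j) (n : Fin d → ℤ) :
    ((ofPointwise M hM).det : (Fin d → ℤ) → ℂ) n = (M n).det :=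
  RingHom.map_det ((Pi.evalRingHom _ n).comp (sPrime d).subtype) _

theorem isUnit_ofPointwise (M : (Fin d → ℤ) → Matrix ι ι ℂ)
    (hM : ∀ i j, PolyGrowth fun n => M n i j) (hdet : ∀ n, (M n).det ≠ 0)
    (hinv : PolyGrowth fun n => ((M n).det)⁻¹) : IsUnit (ofPointwise M hM) := by
  rw [Matrix.isUnit_iff_isUnit_det]
  refine isUnit_of_polyGrowth_inv _ (fun n => ?_) ?_
  · rw [ofPointwise_det_apply]; exact hdet n
  · convert hinv using 1; ext n; simp [ofPointwise_det_apply]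

theorem exists_inverse_of_isUnit {A : Matrix ι ι (sPrime d)} (hA : IsUnit A) :
    ∃ B : Matrix ι ι ((Fin d → ℤ) → ℂ), (∀ i j, PolyGrowth (B i j)) ∧
      (sPrime d).subtype.mapMatrix A * B = 1 ∧ B * (sPrime d).subtype.mapMatrix A = 1 := by
  obtain ⟨u, rfl⟩ := hA
  refine ⟨(sPrime d).subtype.mapMatrix u⁻¹.val, fun i j => (u⁻¹.val i j).2, ?_, ?_⟩
  all_goals rw [← map_mul]; simp

end sPrime

theorem PolyGrowth.of_norm_le_sum_norm {d : ℕ} {ι : Type*} [Fintype ι] {f : (Fin d → ℤ) → ℂ}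
    {g : ι → (Fin d → ℤ) → ℂ} (hg : ∀ i, PolyGrowth (g i)) (h : ∀ n, ‖f n‖ ≤ ∑ i, ‖g i n‖) :
    PolyGrowth f := by
  have hsum : PolyGrowth fun n => ((∑ i, ‖g i n‖ : ℝ) : ℂ) := by
    simpa [Finset.sum_fn] using (sPrime d).sum_mem fun i _ => (hg i).ofReal_norm
  exact hsum.of_norm_le fun n => by
    rw [Complex.norm_of_nonneg (sum_nonneg fun _ _ => norm_nonneg _)]; exact h n

theorem sprime_hermite_general (d N : ℕ)
    (a b : Fin N → (Fin d → ℤ) → ℂ)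
    (ha : ∀ i, PolyGrowth (a i)) (hb : ∀ i, PolyGrowth (b i))
    (hbez : ∀ n : Fin d → ℤ, ∑ i, b i n * a i n = 1) :
    ∃ A B : Matrix (Fin N) (Fin N) ((Fin d → ℤ) → ℂ),
      (∀ i j, PolyGrowth (A i j)) ∧ (∀ i j, PolyGrowth (B i j)) ∧
      A * B = 1 ∧ B * A = 1 ∧
      ∀ i : Fin N, ∀ j : Fin N, (j : ℕ) = 0 → A i j = a i := by
  have hN : 0 < N := Nat.pos_of_ne_zero fun h => by subst h; simpa using hbez 0
  have : Nonempty (Fin N) := ⟨⟨0, hN⟩⟩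
  choose t ht using fun n => Finite.exists_max fun i => ‖a i n‖
  let M n := Matrix.pivotCompletion (a · n) ⟨0, hN⟩ (t n)
  have hpivot n := one_le_sum_norm_mul_norm_of_sum_mul_eq_one (hbez n) (ht n)
  have hM i j : PolyGrowth fun n => M n i j :=
    (ha i).of_norm_le_add_one fun n => Matrix.norm_pivotCompletion_apply_le _ _ _ i j
  have hpos n : 0 < ‖a (t n) n‖ :=
    pos_of_mul_pos_right (one_pos.trans_le (hpivot n)) (sum_nonneg fun _ _ => norm_nonneg _)
  have hdet n : (M n).det ≠ 0 := by
    rw [← norm_pos_iff, Matrix.norm_det_pivotCompletion]; exact hpos n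
  have hinv : PolyGrowth fun n => ((M n).det)⁻¹ := .of_norm_le_sum_norm hb fun n => by
    rw [norm_inv, Matrix.norm_det_pivotCompletion, inv_le_iff_one_le_mul₀ (hpos n)]
    exact hpivot n
  obtain ⟨B, hB, hAB, hBA⟩ := sPrime.exists_inverse_of_isUnit
    (sPrime.isUnit_ofPointwise M hM hdet hinv)
  refine ⟨_, B, fun i j => (sPrime.ofPointwise M hM i j).2, hB, hAB, hBA, fun i j hj => ?_⟩
  obtain rfl : j = ⟨0, hN⟩ := Fin.ext hj
  simp [sPrime.ofPointwise, M]

/-- `s'(ℤ^d)` is a Hermite ring: any unimodular row is the first column of a matrix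
over `s'(ℤ^d)` invertible over `s'(ℤ^d)`. Matrices are taken with entries in the
ring of all functions `ℤ^d → ℂ` (pointwise operations), entries required to lie
in `s'(ℤ^d)`; invertibility over `s'(ℤ^d)` means a two-sided inverse matrix whose
entries also lie in `s'(ℤ^d)`. -/
theorem sprime_hermite (d N : ℕ) (hd : 1 ≤ d)
    (a b : Fin N → (Fin d → ℤ) → ℂ)
    (ha : ∀ i, PolyGrowth (a i)) (hb : ∀ i, PolyGrowth (b i))
    (hbez : ∀ n : Fin d → ℤ, ∑ i, b i n * a i n = 1) :
    ∃ A B : Matrix (Fin N) (Fin N) ((Fin d → ℤ) → ℂ),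
      (∀ i j, PolyGrowth (A i j)) ∧ (∀ i j, PolyGrowth (B i j)) ∧
      A * B = 1 ∧ B * A = 1 ∧
      ∀ i : Fin N, ∀ j : Fin N, (j : ℕ) = 0 → A i j = a i :=
  sprime_hermite_general d N a b ha hb hbez
end

section
/- Let R be a subring of the ring of all functions ℤ^d → ℂ (with pointwise operations) satisfying: (P1) every bounded function ℤ^d → ℂ belongs to R; (P2) if f ∈ R then the pointwise complex conjugate of f belongs to R; (P3) if f ∈ R and there exists δ > 0 with |f(n)| ≥ δ for all n ∈ ℤ^d, then f is invertible in R. Then the Bass stable rank of R is 1: for every a₁, a₂, b₁, b₂ ∈ R with b₁(n)a₁(n) + b₂(n)a₂(n) = 1 for all n ∈ ℤ^d, there exists h ∈ R such that a₁ + h·a₂ is invertible in R. -/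
/-!
Write `a₁ = ‖a₁‖ · u` with `|u| = 1` and take `h = u · conj(a₂) = u · conj(phase a₂) · ‖a₂‖`,
so that `a₁ + h a₂ = u · (‖a₁‖ + ‖a₂‖²)`. The weight `(1 + ‖b₁‖)(1 + ‖b₂‖)²` lies in `R` and, by the
Bezout identity, multiplies `‖a₁‖ + ‖a₂‖²` to a function bounded below by `1/4`; hence
`‖a₁‖ + ‖a₂‖²` is invertible in `R`, and so is `a₁ + h a₂`. Moduli stay in `R` because
`‖f‖ = conj(phase f) · f` with a bounded phase.
-/

open Complex ComplexConjugate

namespace Complex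

/-- The phase `z / ‖z‖` of `z`, equal to `1` at `z = 0`. -/
noncomputable def phase (z : ℂ) : ℂ := exp (arg z * I)

lemma norm_phase (z : ℂ) : ‖phase z‖ = 1 := norm_exp_ofReal_mul_I _

lemma norm_mul_phase (z : ℂ) : ‖z‖ * phase z = z := norm_mul_exp_arg_mul_I z

lemma phase_mul_conj_phase (z : ℂ) : phase z * conj (phase z) = 1 := by
  rw [mul_conj, normSq_eq_norm_sq, norm_phase]
  norm_num

lemma conj_phase_mul_self (z : ℂ) : conj (phase z) * z = ‖z‖ := by
  linear_combination -conj (phase z) * norm_mul_phase z + (‖z‖ : ℂ) * phase_mul_conj_phase z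

lemma add_phase_mul_conj_phase_mul_norm (a₁ a₂ : ℂ) :
    a₁ + phase a₁ * conj (phase a₂) * ‖a₂‖ * a₂ = phase a₁ * (‖a₁‖ + ‖a₂‖ ^ 2) := by
  linear_combination -norm_mul_phase a₁ + phase a₁ * ‖a₂‖ * conj_phase_mul_self a₂

end Complex

lemma one_div_four_le_add_sq_mul (x y p q : ℝ) (hx : 0 ≤ x) (hy : 0 ≤ y) (hp : 0 ≤ p)
    (hq : 0 ≤ q) (h : 1 ≤ p * x + q * y) :
    1 / 4 ≤ (x + y ^ 2) * ((1 + p) * (1 + q) ^ 2) := by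
  rcases le_or_gt (1 / 2) (p * x) with hpx | hpx
  · have hx' : 1 / 2 ≤ x * (1 + p) := by nlinarith
    nlinarith [mul_nonneg (sq_nonneg y) (add_nonneg zero_le_one hp), mul_nonneg hq hq]
  · have hy' : 1 / 2 ≤ y * (1 + q) := by nlinarith
    have hy'' : 1 / 4 ≤ y ^ 2 * (1 + q) ^ 2 := by nlinarith
    nlinarith [mul_nonneg (mul_nonneg hx (add_nonneg zero_le_one hp)) (sq_nonneg (1 + q)),
      mul_nonneg (mul_nonneg (sq_nonneg y) hp) (sq_nonneg (1 + q))]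

lemma one_div_four_le_of_bezout {a₁ a₂ b₁ b₂ : ℂ} (h : b₁ * a₁ + b₂ * a₂ = 1) :
    1 / 4 ≤ (‖a₁‖ + ‖a₂‖ ^ 2) * ((1 + ‖b₁‖) * (1 + ‖b₂‖) ^ 2) := by
  refine one_div_four_le_add_sq_mul _ _ _ _ (norm_nonneg _) (norm_nonneg _) (norm_nonneg _)
    (norm_nonneg _) ?_
  calc (1 : ℝ) = ‖b₁ * a₁ + b₂ * a₂‖ := by rw [h, norm_one]
    _ ≤ ‖b₁‖ * ‖a₁‖ + ‖b₂‖ * ‖a₂‖ := by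
      rw [← norm_mul, ← norm_mul]
      exact norm_add_le _ _

namespace Subring

variable {ι : Type*} {R : Subring (ι → ℂ)}

lemma conj_phase_comp_mem (hR : ∀ f : ι → ℂ, (∃ C : ℝ, ∀ n, ‖f n‖ ≤ C) → f ∈ R)
    (f : ι → ℂ) : (fun n => conj (phase (f n))) ∈ R :=
  hR _ ⟨1, fun n => by rw [norm_conj, norm_phase]⟩

lemma norm_comp_mem (hR : ∀ f : ι → ℂ, (∃ C : ℝ, ∀ n, ‖f n‖ ≤ C) → f ∈ R)
    {f : ι → ℂ} (hf : f ∈ R) : (fun n => (‖f n‖ : ℂ)) ∈ R := by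
  convert R.mul_mem (conj_phase_comp_mem hR f) hf using 1
  exact funext fun n => (conj_phase_mul_self (f n)).symm

lemma exists_inv_of_mul_norm_ge
    (hR : ∀ f ∈ R, ∀ δ : ℝ, 0 < δ → (∀ n, δ ≤ ‖f n‖) → ∃ g ∈ R, ∀ n, f n * g n = 1)
    {f w : ι → ℂ} (hf : f ∈ R) (hw : w ∈ R) {δ : ℝ} (hδ : 0 < δ)
    (hfw : ∀ n, δ ≤ ‖f n * w n‖) : ∃ g ∈ R, ∀ n, f n * g n = 1 := by
  obtain ⟨g, hg, hfwg⟩ := hR (fun n => f n * w n) (R.mul_mem hf hw) δ hδ hfw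
  exact ⟨fun n => w n * g n, R.mul_mem hw hg, fun n => by rw [← mul_assoc, hfwg]⟩

end Subring

theorem subring_bass_stable_rank_one_general (d : ℕ)
    (R : Subring ((Fin d → ℤ) → ℂ))
    (hP1 : ∀ f : (Fin d → ℤ) → ℂ, (∃ C : ℝ, ∀ n, ‖f n‖ ≤ C) → f ∈ R)
    (hP3 : ∀ f ∈ R, ∀ δ : ℝ, 0 < δ → (∀ n, δ ≤ ‖f n‖) →
      ∃ g ∈ R, ∀ n, f n * g n = 1)
    (a₁ a₂ b₁ b₂ : (Fin d → ℤ) → ℂ)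
    (ha₁ : a₁ ∈ R) (ha₂ : a₂ ∈ R) (hb₁ : b₁ ∈ R) (hb₂ : b₂ ∈ R)
    (hbez : ∀ n : Fin d → ℤ, b₁ n * a₁ n + b₂ n * a₂ n = 1) :
    ∃ h ∈ R, (fun n => a₁ n + h n * a₂ n) ∈ R ∧
      ∃ g ∈ R, ∀ n : Fin d → ℤ, (a₁ n + h n * a₂ n) * g n = 1 := by
  have hphase : (fun n => phase (a₁ n)) ∈ R := hP1 _ ⟨1, fun n => (norm_phase _).le⟩
  have hnorm₁ := R.norm_comp_mem hP1 ha₁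
  have hnorm₂ := R.norm_comp_mem hP1 ha₂
  have hh : (fun n => phase (a₁ n) * conj (phase (a₂ n)) * ‖a₂ n‖) ∈ R :=
    R.mul_mem (R.mul_mem hphase (R.conj_phase_comp_mem hP1 a₂)) hnorm₂
  have hM : (fun n => (‖a₁ n‖ + ‖a₂ n‖ ^ 2 : ℂ)) ∈ R :=
    R.add_mem hnorm₁ (R.pow_mem hnorm₂ 2)
  have hW : (fun n => ((1 + ‖b₁ n‖) * (1 + ‖b₂ n‖) ^ 2 : ℂ)) ∈ R :=
    R.mul_mem (R.add_mem R.one_mem (R.norm_comp_mem hP1 hb₁))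
      (R.pow_mem (R.add_mem R.one_mem (R.norm_comp_mem hP1 hb₂)) 2)
  obtain ⟨g, hg, hMg⟩ := R.exists_inv_of_mul_norm_ge hP3 hM hW (by norm_num : (0 : ℝ) < 1 / 4)
    fun n => by
      have hbound := one_div_four_le_of_bezout (hbez n)
      norm_cast
      rwa [Real.norm_of_nonneg (by positivity)]
  refine ⟨_, hh, R.add_mem ha₁ (R.mul_mem hh ha₂), fun n => conj (phase (a₁ n)) * g n,
    R.mul_mem (R.conj_phase_comp_mem hP1 a₁) hg, fun n => ?_⟩
  rw [add_phase_mul_conj_phase_mul_norm]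
  linear_combination (‖a₁ n‖ + ‖a₂ n‖ ^ 2 : ℂ) * g n * phase_mul_conj_phase (a₁ n) + hMg n

/-- The Bass stable rank of a subring `R` of the ring of functions `ℤ^d → ℂ`
containing all bounded functions, stable under complex conjugation, and in which
every element bounded below is invertible, equals one: every unimodular pair over
`R` is reducible. -/
theorem subring_bass_stable_rank_one (d : ℕ)
    (R : Subring ((Fin d → ℤ) → ℂ))
    (hP1 : ∀ f : (Fin d → ℤ) → ℂ, (∃ C : ℝ, ∀ n, ‖f n‖ ≤ C) → f ∈ R)
    (hP2 : ∀ f ∈ R, (fun n => (starRingEnd ℂ) (f n)) ∈ R)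
    (hP3 : ∀ f ∈ R, ∀ δ : ℝ, 0 < δ → (∀ n, δ ≤ ‖f n‖) →
      ∃ g ∈ R, ∀ n, f n * g n = 1)
    (a₁ a₂ b₁ b₂ : (Fin d → ℤ) → ℂ)
    (ha₁ : a₁ ∈ R) (ha₂ : a₂ ∈ R) (hb₁ : b₁ ∈ R) (hb₂ : b₂ ∈ R)
    (hbez : ∀ n : Fin d → ℤ, b₁ n * a₁ n + b₂ n * a₂ n = 1) :
    ∃ h ∈ R, (fun n => a₁ n + h n * a₂ n) ∈ R ∧
      ∃ g ∈ R, ∀ n : Fin d → ℤ, (a₁ n + h n * a₂ n) * g n = 1 :=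
  subring_bass_stable_rank_one_general d R hP1 hP3 a₁ a₂ b₁ b₂ ha₁ ha₂ hb₁ hb₂ hbez
end

section
/- Every unit of E_exp(ℂ) is of the form z ↦ e^{a+bz}: if f ∈ E_exp(ℂ) and there exists g ∈ E_exp(ℂ) with f(z)g(z) = 1 for all z ∈ ℂ, then there exist constants a, b ∈ ℂ such that f(z) = e^{a+bz} for all z ∈ ℂ. -/
/-- `f : ℂ → ℂ` is an entire function of exponential type, i.e. belongs to
`E_exp(ℂ)`. -/
def ExpType (f : ℂ → ℂ) : Prop :=
  Differentiable ℂ f ∧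
    ∃ C : ℝ, 0 < C ∧ ∃ N : ℕ, ∃ M : ℝ, 0 < M ∧
      ∀ z : ℂ, ‖f z‖ ≤ C * (1 + ‖z‖) ^ N * Real.exp (M * |z.im|)

/-!
A unit `f` has no zeros, so `f = exp H` for an entire `H`. The exponential-type bound on `f`
gives `Re H z = log ‖f z‖ ≤ A + B ‖z‖`; Borel–Carathéodory upgrades this to
`‖H z‖ ≤ a + b ‖z‖`, Cauchy's estimate then bounds `H'`, which is constant by Liouville, so `H`
is affine.
-/

open Complex Metric

theorem Differentiable.exists_eq_exp_of_ne_zero {f : ℂ → ℂ} (hf : Differentiable ℂ f)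
    (hf0 : ∀ z, f z ≠ 0) : ∃ H : ℂ → ℂ, Differentiable ℂ H ∧ ∀ z, f z = cexp (H z) := by
  -- `H` is a primitive of `f' / f` with `exp (H 0) = f 0`, so `f * exp (-H)` is constant.
  obtain ⟨H, hH0, hH⟩ :=
    ((hf.deriv.div hf hf0).isExactOn_univ).with_val_at 0 (Complex.log (f 0))
  have hderiv (z : ℂ) : HasDerivAt (fun w => f w * cexp (-H w)) 0 z := by
    have : HasDerivAt (fun w => f w * cexp (-H w))
        (_root_.deriv f z * cexp (-H z) + f z * (cexp (-H z) * -(_root_.deriv f z / f z))) z :=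
      (hf z).hasDerivAt.mul (hH z trivial).neg.cexp
    convert this using 1
    field_simp [hf0 z]
    ring
  have hconst (z : ℂ) : f z * cexp (-H z) = 1 := by
    rw [is_const_of_deriv_eq_zero (fun w => (hderiv w).differentiableAt)
      (fun w => (hderiv w).deriv) z 0, hH0, Complex.exp_neg, Complex.exp_log (hf0 0),
      mul_inv_cancel₀ (hf0 0)]
  refine ⟨H, fun z => (hH z trivial).differentiableAt, fun z => ?_⟩
  rw [← mul_one (cexp (H z)), ← hconst z, Complex.exp_neg]
  field_simp

theorem ExpType.exists_norm_le_exp {f : ℂ → ℂ} (hf : ExpType f) :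
    ∃ A B : ℝ, ∀ z, ‖f z‖ ≤ Real.exp (A + B * ‖z‖) := by
  obtain ⟨-, C, hC, N, M, hM, hbound⟩ := hf
  refine ⟨Real.log C, N + M, fun z => ?_⟩
  calc ‖f z‖ ≤ C * (1 + ‖z‖) ^ N * Real.exp (M * |z.im|) := hbound z
    _ ≤ Real.exp (Real.log C) * Real.exp ‖z‖ ^ N * Real.exp (M * ‖z‖) := by
      rw [Real.exp_log hC]
      gcongr
      · linarith [Real.add_one_le_exp ‖z‖]
      · exact abs_im_le_norm z
    _ = Real.exp (Real.log C + (N + M) * ‖z‖) := by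
      rw [← Real.exp_nat_mul, ← Real.exp_add, ← Real.exp_add]
      ring_nf

theorem Differentiable.exists_norm_le_of_re_le {H : ℂ → ℂ} (hH : Differentiable ℂ H) {A B : ℝ}
    (hre : ∀ z, (H z).re ≤ A + B * ‖z‖) : ∃ a b : ℝ, ∀ z, ‖H z‖ ≤ a + b * ‖z‖ := by
  refine ⟨2 * (|A| + |B| + 1) + 3 * ‖H 0‖, 4 * |B|, fun z => ?_⟩
  set r := ‖z‖
  have hr : 0 ≤ r := norm_nonneg z
  set M := |A| + |B| * (2 * r + 1) + 1
  have hmaps : Set.MapsTo H (ball 0 (2 * r + 1)) {w | w.re ≤ M} := fun w hw => by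
    have hw' : ‖w‖ < 2 * r + 1 := mem_ball_zero_iff.mp hw
    calc (H w).re ≤ A + B * ‖w‖ := hre w
      _ ≤ |A| + |B| * ‖w‖ :=
        add_le_add (le_abs_self A) (mul_le_mul_of_nonneg_right (le_abs_self B) (norm_nonneg w))
      _ ≤ M := by linarith [mul_le_mul_of_nonneg_left hw'.le (abs_nonneg B)]
  have hbc := borelCaratheodory (by positivity) hH.differentiableOn hmaps (by positivity)
    (mem_ball_zero_iff.mpr (by linarith))
  have hr1 : 0 < 2 * r + 1 - r := by linarith
  calc ‖H z‖ ≤ 2 * M * r / (2 * r + 1 - r) + ‖H 0‖ * (2 * r + 1 + r) / (2 * r + 1 - r) := hbc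
    _ ≤ 2 * M + ‖H 0‖ * 3 := by
      gcongr
      · rw [div_le_iff₀ hr1]; nlinarith [show 0 ≤ M by positivity]
      · rw [div_le_iff₀ hr1]; nlinarith [norm_nonneg (H 0)]
    _ = 2 * (|A| + |B| + 1) + 3 * ‖H 0‖ + 4 * |B| * r := by ring

theorem Differentiable.norm_deriv_le_of_norm_le {H : ℂ → ℂ} (hH : Differentiable ℂ H) {a b : ℝ}
    (hgrowth : ∀ z, ‖H z‖ ≤ a + b * ‖z‖) (c : ℂ) : ‖_root_.deriv H c‖ ≤ 1 + |b| := by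
  set R := |a| + |b| * ‖c‖ + 1
  have hR : 0 < R := by positivity
  have hsphere : ∀ w ∈ sphere c R, ‖H w‖ ≤ (1 + |b|) * R := fun w hw => by
    have hw' : ‖w‖ ≤ ‖c‖ + R := by
      simpa [mem_sphere_iff_norm.mp hw] using norm_le_norm_add_norm_sub' w c
    calc ‖H w‖ ≤ a + b * ‖w‖ := hgrowth w
      _ ≤ |a| + |b| * (‖c‖ + R) :=
        add_le_add (le_abs_self a) <|
          (mul_le_mul_of_nonneg_right (le_abs_self b) (norm_nonneg w)).trans
            (mul_le_mul_of_nonneg_left hw' (abs_nonneg b))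
      _ ≤ (1 + |b|) * R := by nlinarith [abs_nonneg b, abs_nonneg a]
  simpa [hR.ne'] using norm_deriv_le_of_forall_mem_sphere_norm_le hR hH.diffContOnCl hsphere

theorem Differentiable.exists_eq_add_mul_of_norm_le {H : ℂ → ℂ} (hH : Differentiable ℂ H)
    {a b : ℝ} (hgrowth : ∀ z, ‖H z‖ ≤ a + b * ‖z‖) : ∃ c d : ℂ, ∀ z, H z = c + d * z := by
  have hderiv_const (z : ℂ) : _root_.deriv H z = _root_.deriv H 0 :=
    hH.deriv.apply_eq_apply_of_bounded (isBounded_iff_forall_norm_le.mpr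
      ⟨1 + |b|, Set.forall_mem_range.mpr (hH.norm_deriv_le_of_norm_le hgrowth)⟩) z 0
  have hdiff : Differentiable ℂ fun z => H z - _root_.deriv H 0 * z := hH.sub (by fun_prop)
  have hzero (z : ℂ) : _root_.deriv (fun z => H z - _root_.deriv H 0 * z) z = 0 := by
    simp [deriv_fun_sub (hH z) (by fun_prop : DifferentiableAt ℂ (_root_.deriv H 0 * ·) z),
      hderiv_const]
  refine ⟨H 0, _root_.deriv H 0, fun z => ?_⟩
  simpa [sub_eq_iff_eq_add, add_comm] using is_const_of_deriv_eq_zero hdiff hzero z 0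

/-- Every unit of `E_exp(ℂ)` has the form `z ↦ e^{a + b z}`. -/
theorem units_of_Eexp (f : ℂ → ℂ) (hf : ExpType f)
    (hu : ∃ g : ℂ → ℂ, ExpType g ∧ ∀ z : ℂ, f z * g z = 1) :
    ∃ a b : ℂ, ∀ z : ℂ, f z = Complex.exp (a + b * z) := by
  obtain ⟨g, -, hfg⟩ := hu
  have hf0 (z : ℂ) : f z ≠ 0 := left_ne_zero_of_mul_eq_one (hfg z)
  obtain ⟨H, hH, hfH⟩ := hf.1.exists_eq_exp_of_ne_zero hf0
  obtain ⟨A, B, hgrowth⟩ := hf.exists_norm_le_exp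
  have hre (z : ℂ) : (H z).re ≤ A + B * ‖z‖ := by
    rw [← Real.exp_le_exp, ← Complex.norm_exp, ← hfH]
    exact hgrowth z
  obtain ⟨a, b, hlin⟩ := hH.exists_norm_le_of_re_le hre
  obtain ⟨c, d, hcd⟩ := hH.exists_eq_add_mul_of_norm_le hlin
  exact ⟨c, d, fun z => by rw [hfH, hcd]⟩
end

section
/- Let h : ℂ → ℂ be an entire function for which there exist constants A, B ≥ 0 such that |Re h(z)| ≤ A + B|z| for all z ∈ ℂ. Then h is a polynomial of degree at most 1; that is, there exists c ∈ ℂ such that h(z) = h(0) + c·z for all z ∈ ℂ. -/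
/-!
By the Borel–Carathéodory inequality on the disc of radius `2‖z‖`, a linear upper bound on
`Re h` gives a linear bound on `‖h‖`. Cauchy's estimate on the circle of radius `‖z‖ + 1` then
bounds `h'` uniformly, so `h'` is constant by Liouville's theorem.
-/

open Metric

namespace Complex

variable {f : ℂ → ℂ}

theorem norm_le_of_re_le_add_mul (hf : Differentiable ℂ f) {M B : ℝ} (hM : 0 < M) (hB : 0 ≤ B)
    (hre : ∀ z, (f z).re ≤ M + B * ‖z‖) (z : ℂ) :
    ‖f z‖ ≤ 2 * M + 4 * B * ‖z‖ + 3 * ‖f 0‖ := by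
  rcases eq_or_ne z 0 with rfl | hz
  · simp only [norm_zero, mul_zero, add_zero]
    linarith [norm_nonneg (f 0)]
  have hz' : 0 < ‖z‖ := norm_pos_iff.2 hz
  have hmaps : Set.MapsTo f (ball 0 (2 * ‖z‖)) {w | w.re ≤ M + B * (2 * ‖z‖)} := fun w hw =>
    (hre w).trans <| by gcongr; exact (mem_ball_zero_iff.1 hw).le
  calc ‖f z‖
      ≤ 2 * (M + B * (2 * ‖z‖)) * ‖z‖ / (2 * ‖z‖ - ‖z‖)
          + ‖f 0‖ * (2 * ‖z‖ + ‖z‖) / (2 * ‖z‖ - ‖z‖) :=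
        borelCaratheodory (by positivity) hf.differentiableOn hmaps (by positivity)
          (mem_ball_zero_iff.2 (by linarith))
    _ = 2 * M + 4 * B * ‖z‖ + 3 * ‖f 0‖ := by field_simp; ring

theorem norm_deriv_le_of_norm_le_add_mul (hf : Differentiable ℂ f) {a b : ℝ} (ha : 0 ≤ a)
    (hb : 0 ≤ b) (hfab : ∀ z, ‖f z‖ ≤ a + b * ‖z‖) (c : ℂ) : ‖deriv f c‖ ≤ a + 2 * b := by
  have hsphere : ∀ z ∈ sphere c (‖c‖ + 1), ‖f z‖ ≤ a + b * (2 * ‖c‖ + 1) := fun z hz =>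
    (hfab z).trans <| by
      gcongr
      linarith [norm_le_norm_add_norm_sub' z c, (mem_sphere_iff_norm.1 hz).le]
  calc ‖deriv f c‖
      ≤ (a + b * (2 * ‖c‖ + 1)) / (‖c‖ + 1) :=
        norm_deriv_le_of_forall_mem_sphere_norm_le (by positivity) hf.diffContOnCl hsphere
    _ ≤ a + 2 * b := by
        rw [div_le_iff₀ (by positivity)]
        nlinarith [mul_nonneg ha (norm_nonneg c)]

theorem exists_eq_add_mul_of_norm_le_add_mul (hf : Differentiable ℂ f) {a b : ℝ} (ha : 0 ≤ a)
    (hb : 0 ≤ b) (hfab : ∀ z, ‖f z‖ ≤ a + b * ‖z‖) : ∃ c, ∀ z, f z = f 0 + c * z := by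
  obtain ⟨c, hc⟩ := hf.deriv.exists_const_forall_eq_of_bounded <|
    isBounded_iff_forall_norm_le.2 ⟨a + 2 * b, Set.forall_mem_range.2
      (norm_deriv_le_of_norm_le_add_mul hf ha hb hfab)⟩
  have hg : Differentiable ℂ fun z => f z - c * z := hf.sub (differentiable_id.const_mul c)
  have hg' : ∀ z, deriv (fun z => f z - c * z) z = 0 := fun z =>
    ((hf z).hasDerivAt.sub ((hasDerivAt_id' z).const_mul c)).deriv.trans <| by
      rw [hc, mul_one, sub_self]
  refine ⟨c, fun z => ?_⟩
  have := is_const_of_deriv_eq_zero hg hg' z 0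
  simp only [mul_zero, sub_zero] at this
  rw [← this]
  ring

end Complex

/-- An entire function whose real part grows at most linearly is a polynomial of
degree at most one. -/
theorem entire_linear_re_growth (h : ℂ → ℂ) (hh : Differentiable ℂ h)
    (A B : ℝ) (hA : 0 ≤ A) (hB : 0 ≤ B)
    (hre : ∀ z : ℂ, |(h z).re| ≤ A + B * ‖z‖) :
    ∃ c : ℂ, ∀ z : ℂ, h z = h 0 + c * z := by
  have hre_le : ∀ z, (h z).re ≤ (A + 1) + B * ‖z‖ := fun z => by
    linarith [le_abs_self (h z).re, hre z]
  have hnorm : ∀ z, ‖h z‖ ≤ (2 * (A + 1) + 3 * ‖h 0‖) + 4 * B * ‖z‖ := fun z => by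
    linarith [Complex.norm_le_of_re_le_add_mul hh (by linarith) hB hre_le z]
  exact Complex.exists_eq_add_mul_of_norm_le_add_mul hh (by positivity) (by positivity) hnorm
end

section
/- The pair (z − 1, z³) is unimodular in E_exp(ℂ) but is not reducible: there exist p, q ∈ E_exp(ℂ) with p(z)(z − 1) + q(z)z³ = 1 for all z ∈ ℂ, yet for every h ∈ E_exp(ℂ) the function z ↦ z − 1 + h(z)z³ is not a unit of E_exp(ℂ), i.e. there is no g ∈ E_exp(ℂ) with (z − 1 + h(z)z³)·g(z) = 1 for all z ∈ ℂ. Consequently the Bass stable rank of E_exp(ℂ) is at least 2. -/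
/-!
A unit `f` of `E_exp(ℂ)` has no zeros, so `f = exp φ` with `φ` entire. The growth bound on `f`
gives `Re φ(z) = O(|z|)`; Borel–Carathéodory turns this into `|φ(z)| = O(|z|)`, and Cauchy's
estimate with Liouville's theorem then makes `φ` affine, so `f(z) = f(0) e^{bz}`. For
`f = z - 1 + h z³` we have `f(0) = -1` and `f'(0) = 1`, which forces `f(z) = -e^{-z}`; but this
grows exponentially along the negative real axis, where a function of exponential type grows at
most polynomially. Unimodularity is the identity `-(z² + z + 1)(z - 1) + z³ = 1`.
-/

open Complex Filter Metric

theorem Real.exists_mul_one_add_pow_lt_exp (C : ℝ) (N : ℕ) :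
    ∃ t : ℝ, 0 ≤ t ∧ C * (1 + t) ^ N < Real.exp t := by
  have hlim : Tendsto (fun t : ℝ => Real.exp (1 + t) / (1 + t) ^ N) atTop atTop :=
    (Real.tendsto_exp_div_pow_atTop N).comp (tendsto_atTop_add_const_left _ 1 tendsto_id)
  obtain ⟨t, ht, ht0⟩ :=
    ((hlim.eventually_gt_atTop (C * Real.exp 1)).and (eventually_ge_atTop 0)).exists
  refine ⟨t, ht0, ?_⟩
  rw [lt_div_iff₀ (by positivity), Real.exp_add, mul_right_comm, mul_comm (Real.exp 1)] at ht
  exact lt_of_mul_lt_mul_right ht (Real.exp_pos 1).le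

namespace Complex

variable {f φ : ℂ → ℂ}

theorem exists_differentiable_exp_eq (hf : Differentiable ℂ f) (h0 : ∀ z, f z ≠ 0) :
    ∃ φ : ℂ → ℂ, Differentiable ℂ φ ∧ ∀ z, cexp (φ z) = f z := by
  obtain ⟨Ψ, hΨ0, hΨ⟩ := ((hf.deriv.div hf h0).isExactOn_univ).with_val_at 0 (log (f 0))
  have hΨ' : ∀ z, HasDerivAt Ψ (deriv f z / f z) z := fun z => hΨ z (Set.mem_univ z)
  have hderiv : ∀ z, HasDerivAt (fun w => f w * cexp (-Ψ w)) 0 z := by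
    intro z
    refine ((hf z).hasDerivAt.mul (hΨ' z).neg.cexp).congr_deriv ?_
    field_simp [h0 z]
    ring
  refine ⟨Ψ, fun z => (hΨ' z).differentiableAt, fun z => ?_⟩
  have hconst := is_const_of_deriv_eq_zero (fun z => (hderiv z).differentiableAt)
    (fun z => (hderiv z).deriv) z 0
  rw [hΨ0, exp_neg, exp_neg, exp_log (h0 0), mul_inv_cancel₀ (h0 0)] at hconst
  exact (eq_of_mul_inv_eq_one hconst).symm

theorem eq_add_mul_of_norm_le_linear {A : ℝ} (hφ : Differentiable ℂ φ)
    (hA : ∀ z, ‖φ z‖ ≤ A * (1 + ‖z‖)) (z : ℂ) : φ z = φ 0 + deriv φ 0 * z := by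
  have hderiv_le : ∀ c, ‖deriv φ c‖ ≤ 2 * A := by
    intro c
    have hR : 0 < 1 + ‖c‖ := by positivity
    calc ‖deriv φ c‖ ≤ 2 * A * (1 + ‖c‖) / (1 + ‖c‖) := by
          refine norm_deriv_le_of_forall_mem_sphere_norm_le hR hφ.diffContOnCl fun w hw => ?_
          have hw' : ‖w‖ ≤ 1 + 2 * ‖c‖ := by
            rw [mem_sphere_iff_norm] at hw
            linarith [norm_le_norm_add_norm_sub' w c]
          have hA0 : 0 ≤ A := by simpa using (norm_nonneg _).trans (hA 0)
          calc ‖φ w‖ ≤ A * (1 + ‖w‖) := hA w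
            _ ≤ 2 * A * (1 + ‖c‖) := by nlinarith
      _ = 2 * A := mul_div_cancel_right₀ _ hR.ne'
  have hconst : ∀ c, deriv φ c = deriv φ 0 := fun c =>
    hφ.deriv.apply_eq_apply_of_bounded
      (isBounded_iff_forall_norm_le.2 ⟨2 * A, by rintro _ ⟨c, rfl⟩; exact hderiv_le c⟩) c 0
  have hlin : ∀ c, HasDerivAt (fun w => φ w - deriv φ 0 * w) 0 c := fun c =>
    ((hφ c).hasDerivAt.sub ((hasDerivAt_id c).const_mul (deriv φ 0))).congr_deriv
      (by rw [hconst c, mul_one, sub_self])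
  have := is_const_of_deriv_eq_zero (fun c => (hlin c).differentiableAt)
    (fun c => (hlin c).deriv) z 0
  simp only [mul_zero, sub_zero] at this
  rw [← this]; ring

theorem exists_norm_le_linear_of_re_le_linear {K : ℝ} (hφ : Differentiable ℂ φ)
    (hK : ∀ z, (φ z).re ≤ K * (1 + ‖z‖)) :
    ∃ A : ℝ, ∀ z, ‖φ z‖ ≤ A * (1 + ‖z‖) := by
  refine ⟨6 * |K| + 2 + 3 * ‖φ 0‖, fun z => ?_⟩
  have hz := norm_nonneg z
  have hK0 := abs_nonneg K
  have hφ0 := norm_nonneg (φ 0)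
  obtain ⟨R, hRdef⟩ : ∃ R : ℝ, R = 2 * (1 + ‖z‖) := ⟨_, rfl⟩
  have hR : 0 < R := by rw [hRdef]; positivity
  have hzR : z ∈ ball 0 R := by rw [mem_ball_zero_iff, hRdef]; linarith
  have hmaps : Set.MapsTo φ (ball 0 R) {w | w.re ≤ |K| * (1 + R) + 1} := fun w hw => by
    have hw : ‖w‖ < R := mem_ball_zero_iff.mp hw
    have : K * (1 + ‖w‖) ≤ |K| * (1 + R) := by nlinarith [le_abs_self K, norm_nonneg w]
    exact (hK w).trans (by linarith)
  have hBC := borelCaratheodory (by positivity) hφ.differentiableOn hmaps hR hzR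
  have hden : 0 < R - ‖z‖ := by rw [hRdef]; linarith
  have h1 : 2 * (|K| * (1 + R) + 1) * ‖z‖ / (R - ‖z‖) ≤ (6 * |K| + 2) * (1 + ‖z‖) := by
    rw [div_le_iff₀ hden, hRdef]
    nlinarith [mul_nonneg (mul_nonneg hK0 hz) hz, mul_nonneg hK0 hz]
  have h2 : ‖φ 0‖ * (R + ‖z‖) / (R - ‖z‖) ≤ 3 * ‖φ 0‖ * (1 + ‖z‖) := by
    rw [div_le_iff₀ hden, hRdef]
    nlinarith [mul_nonneg (mul_nonneg hφ0 hz) hz, mul_nonneg hφ0 hz]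
  linarith

end Complex

theorem le_mul_one_add_norm_of_exp_le {C M r : ℝ} {N : ℕ} {z : ℂ} (hC : 0 < C) (hM : 0 ≤ M)
    (hr : Real.exp r ≤ C * (1 + ‖z‖) ^ N * Real.exp (M * |z.im|)) :
    r ≤ (|Real.log C| + N + M) * (1 + ‖z‖) := by
  have hz : 0 ≤ ‖z‖ := norm_nonneg z
  have hlog : r ≤ Real.log C + N * Real.log (1 + ‖z‖) + M * |z.im| := by
    rwa [← Real.exp_le_exp, Real.exp_add, Real.exp_add, Real.exp_log hC, ← Real.log_pow,
      Real.exp_log (by positivity)]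
  have h1 : Real.log (1 + ‖z‖) ≤ ‖z‖ := by
    linarith [Real.log_le_sub_one_of_pos (by positivity : 0 < 1 + ‖z‖)]
  have h2 : M * |z.im| ≤ M * ‖z‖ := mul_le_mul_of_nonneg_left (abs_im_le_norm z) hM
  have h3 : (N : ℝ) * Real.log (1 + ‖z‖) ≤ N * ‖z‖ := mul_le_mul_of_nonneg_left h1 N.cast_nonneg
  nlinarith [le_abs_self (Real.log C), mul_nonneg (abs_nonneg (Real.log C)) hz,
    mul_nonneg (N.cast_nonneg : (0 : ℝ) ≤ N) hz]

theorem mul_one_add_norm_pow_mul_exp_mono {C M M' : ℝ} {N N' : ℕ} (hC : 0 ≤ C) (hN : N ≤ N')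
    (hM : M ≤ M') (z : ℂ) :
    C * (1 + ‖z‖) ^ N * Real.exp (M * |z.im|) ≤ C * (1 + ‖z‖) ^ N' * Real.exp (M' * |z.im|) := by
  gcongr
  exact le_add_of_nonneg_right (norm_nonneg z)

namespace ExpType

variable {f g : ℂ → ℂ}

theorem const (c : ℂ) : ExpType fun _ => c := by
  refine ⟨differentiable_const c, ‖c‖ + 1, by positivity, 0, 1, one_pos, fun z => ?_⟩
  have := Real.one_le_exp (by positivity : 0 ≤ 1 * |z.im|)
  rw [pow_zero, mul_one]
  nlinarith [norm_nonneg c]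

theorem id : ExpType fun z => z := by
  refine ⟨differentiable_id, 1, one_pos, 1, 1, one_pos, fun z => ?_⟩
  have := Real.one_le_exp (by positivity : 0 ≤ 1 * |z.im|)
  rw [pow_one, one_mul]
  nlinarith [norm_nonneg z]

theorem add (hf : ExpType f) (hg : ExpType g) : ExpType fun z => f z + g z := by
  obtain ⟨hfd, C, hC, N, M, hM, hfb⟩ := hf
  obtain ⟨hgd, C', hC', N', M', hM', hgb⟩ := hg
  refine ⟨hfd.add hgd, C + C', by positivity, N + N', M + M', by positivity, fun z => ?_⟩
  calc ‖f z + g z‖ ≤ ‖f z‖ + ‖g z‖ := norm_add_le _ _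
    _ ≤ C * (1 + ‖z‖) ^ (N + N') * Real.exp ((M + M') * |z.im|)
        + C' * (1 + ‖z‖) ^ (N + N') * Real.exp ((M + M') * |z.im|) := by
      gcongr
      · exact (hfb z).trans (mul_one_add_norm_pow_mul_exp_mono hC.le (by omega) (by linarith) z)
      · exact (hgb z).trans (mul_one_add_norm_pow_mul_exp_mono hC'.le (by omega) (by linarith) z)
    _ = (C + C') * (1 + ‖z‖) ^ (N + N') * Real.exp ((M + M') * |z.im|) := by ring

theorem mul (hf : ExpType f) (hg : ExpType g) : ExpType fun z => f z * g z := by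
  obtain ⟨hfd, C, hC, N, M, hM, hfb⟩ := hf
  obtain ⟨hgd, C', hC', N', M', hM', hgb⟩ := hg
  refine ⟨hfd.mul hgd, C * C', by positivity, N + N', M + M', by positivity, fun z => ?_⟩
  calc ‖f z * g z‖ = ‖f z‖ * ‖g z‖ := norm_mul _ _
    _ ≤ (C * (1 + ‖z‖) ^ N * Real.exp (M * |z.im|)) *
        (C' * (1 + ‖z‖) ^ N' * Real.exp (M' * |z.im|)) :=
      mul_le_mul (hfb z) (hgb z) (norm_nonneg _) (by positivity)
    _ = C * C' * (1 + ‖z‖) ^ (N + N') * Real.exp ((M + M') * |z.im|) := by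
      rw [pow_add, add_mul, Real.exp_add]; ring

theorem neg (hf : ExpType f) : ExpType fun z => -f z := by
  simpa using (const (-1)).mul hf

theorem sub (hf : ExpType f) (hg : ExpType g) : ExpType fun z => f z - g z := by
  simpa only [sub_eq_add_neg] using hf.add hg.neg

theorem pow (hf : ExpType f) (n : ℕ) : ExpType fun z => f z ^ n := by
  induction n with
  | zero => simpa using const 1
  | succ n ih => simpa only [pow_succ] using ih.mul hf

theorem eq_mul_exp_of_ne_zero (hf : ExpType f) (h0 : ∀ z, f z ≠ 0) :
    ∃ b : ℂ, ∀ z, f z = f 0 * cexp (b * z) := by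
  obtain ⟨φ, hφ, hexp⟩ := exists_differentiable_exp_eq hf.1 h0
  obtain ⟨C, hC, N, M, hM, hfb⟩ := hf.2
  have hre : ∀ z, (φ z).re ≤ (|Real.log C| + N + M) * (1 + ‖z‖) := fun z =>
    le_mul_one_add_norm_of_exp_le hC hM.le (by rw [← norm_exp, hexp]; exact hfb z)
  obtain ⟨A, hA⟩ := exists_norm_le_linear_of_re_le_linear hφ hre
  refine ⟨deriv φ 0, fun z => ?_⟩
  rw [← hexp, ← hexp, eq_add_mul_of_norm_le_linear hφ hA z, exp_add]

end ExpType

theorem not_expType_neg_exp_neg : ¬ ExpType fun z => -cexp (-z) := by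
  rintro ⟨-, C, -, N, M, -, hbound⟩
  obtain ⟨t, ht, hlt⟩ := Real.exists_mul_one_add_pow_lt_exp C N
  have := hbound (-t)
  simp only [neg_neg, norm_neg, norm_exp_ofReal, norm_real, Real.norm_eq_abs, abs_of_nonneg ht,
    neg_im, ofReal_im, neg_zero, abs_zero, mul_zero, Real.exp_zero, mul_one] at this
  linarith

/-- The pair `(z - 1, z³)` is unimodular in `E_exp(ℂ)` but not reducible, so the
Bass stable rank of `E_exp(ℂ)` is at least two. -/
theorem unimodular_pair_not_reducible :
    (∃ p q : ℂ → ℂ, ExpType p ∧ ExpType q ∧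
      ∀ z : ℂ, p z * (z - 1) + q z * z ^ 3 = 1) ∧
    ∀ h : ℂ → ℂ, ExpType h →
      ¬ ∃ g : ℂ → ℂ, ExpType g ∧ ∀ z : ℂ, (z - 1 + h z * z ^ 3) * g z = 1 := by
  refine ⟨⟨fun z => -(z ^ 2 + z + 1), fun _ => 1,
    (((ExpType.id.pow 2).add .id).add (.const 1)).neg, .const 1, fun z => by ring⟩, ?_⟩
  rintro h hh ⟨g, -, hfg⟩
  set f : ℂ → ℂ := fun z => z - 1 + h z * z ^ 3
  have hf : ExpType f := (ExpType.id.sub (.const 1)).add (hh.mul (ExpType.id.pow 3))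
  obtain ⟨b, hb⟩ := hf.eq_mul_exp_of_ne_zero fun z hz => by simpa [f, hz] using hfg z
  have hf0 : f 0 = -1 := by simp [f]
  have hderiv : HasDerivAt f 1 0 :=
    (((hasDerivAt_id 0).sub_const 1).add
      ((hh.1 0).hasDerivAt.mul (hasDerivAt_pow 3 0))).congr_deriv (by simp)
  have hderiv' : HasDerivAt f (-b) 0 := by
    rw [funext hb, hf0]
    exact (((hasDerivAt_id 0).const_mul b).cexp.const_mul (-1)).congr_deriv (by simp)
  have hb1 : b = -1 := by linear_combination hderiv.unique hderiv'
  refine not_expType_neg_exp_neg ?_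
  convert hf using 2 with z
  rw [hb z, hf0, hb1, neg_one_mul, neg_one_mul]
end
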